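/- Let d ≥ 1 be an integer, σ, μ > 0, R > 0, ε > 0, and ᾱ ∈ (0,1). Define φ(x) = −2(1−x)³ + 3(1−x)² and γ : [0,∞) → ℝ by γ(r) = ᾱ for 0 ≤ r ≤ R, γ(r) = ᾱ·φ((r−R)/(εR)) for R < r ≤ (1+ε)R, and γ(r) = 0 for r > (1+ε)R. Then: (i) γ is continuously differentiable on [0,∞), nonincreasing, with 0 ≤ γ ≤ ᾱ, support contained in [0,(1+ε)R], and γ ≡ ᾱ on [0,R]; (ii) if 6/ε² + 3(d−1)/(2ε) ≤ R²·μ·(1−ᾱ)/(σᾱ), then for every r ∈ (R,(1+ε)R), σ·|γ''(r) + ((d−1)/r)·γ'(r)| ≤ μ·(1 − γ(r)); i.e., the radial Laplacian of γ satisfies |σΔγ| ≤ μ(1−γ) on the annulus R < |x| < (1+ε)R. -/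

import Mathlib

/-!
Write `γ r = ᾱ · S ((r - R) / (εR))`, where `S` is the cubic `φ` clamped to `[0, 1]`
(`S = 1` on `(-∞, 0]`, `S = 0` on `[1, ∞)`). Since `φ'(x) = -6x(1-x)` vanishes at `0` and `1`,
the clamping keeps `S` of class `C¹`, and since `φ` decreases from `1` to `0` on `[0, 1]`,
`S` is antitone with values in `[0, 1]`. On the annulus `γ` is the rescaled cubic itself, and
`|φ''| ≤ 6`, `|φ'| ≤ 3/2` on `[0, 1]` together with `(d-1)/r ≤ (d-1)/R` give
`|γ'' + (d-1)/r · γ'| ≤ ᾱ/R² · (6/ε² + 3(d-1)/(2ε))`; the hypothesis bounds `σ` times this by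
`μ(1 - ᾱ) ≤ μ(1 - γ)`.
-/

open Set

/-- The cubic cut-off profile `φ(x) = -2(1-x)³ + 3(1-x)²`. -/
noncomputable def profPhi (x : ℝ) : ℝ := -2 * (1 - x) ^ 3 + 3 * (1 - x) ^ 2

/-- The radial profile `γ`: equal to `ᾱ` on `[0,R]`, to `ᾱ φ((r-R)/(εR))` on
`(R,(1+ε)R]`, and `0` beyond. -/
noncomputable def gammaProf (ᾱ R ε : ℝ) (r : ℝ) : ℝ :=
  if r ≤ R then ᾱ
  else if r ≤ (1 + ε) * R then ᾱ * profPhi ((r - R) / (ε * R))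
  else 0

theorem antitone_comp_projIcc {α β : Type*} [LinearOrder α] [Preorder β] {a b : α}
    (hab : a ≤ b) {g : α → β} (hg : AntitoneOn g (Icc a b)) :
    Antitone (fun y => g (projIcc a b hab y)) :=
  fun _ _ hxy => hg (projIcc a b hab _).2 (projIcc a b hab _).2 (monotone_projIcc hab hxy)

section ProjIcc

variable {F : Type*} [NormedAddCommGroup F] [NormedSpace ℝ F]

theorem HasDerivWithinAt.of_isClosed {f : ℝ → F} {f' : F} {x : ℝ} {s : Set ℝ}
    (hs : IsClosed s) (h : x ∈ s → HasDerivWithinAt f f' s x) : HasDerivWithinAt f f' s x := by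
  by_cases hx : x ∈ s
  · exact h hx
  · exact HasFDerivWithinAt.of_notMem_closure (by rwa [hs.closure_eq])

variable {a b : ℝ} (hab : a ≤ b) {g g' : ℝ → F}

-- The derivative is computed separately on the closed pieces `(-∞, a]`, `[a, b]`, `[b, ∞)`.
theorem hasDerivAt_comp_projIcc (hg : ∀ x, HasDerivAt g (g' x) x) (ha : g' a = 0)
    (hb : g' b = 0) (x : ℝ) :
    HasDerivAt (fun y => g (projIcc a b hab y)) (g' (projIcc a b hab x)) x := by
  have left : HasDerivWithinAt (fun y => g (projIcc a b hab y)) (g' (projIcc a b hab x))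
      (Iic a) x := .of_isClosed isClosed_Iic fun hx => by
    rw [projIcc_of_le_left hab hx, ha]
    exact (hasDerivWithinAt_const x _ (g a)).congr
      (fun y hy => by rw [projIcc_of_le_left hab hy]) (by rw [projIcc_of_le_left hab hx])
  have mid : HasDerivWithinAt (fun y => g (projIcc a b hab y)) (g' (projIcc a b hab x))
      (Icc a b) x := .of_isClosed isClosed_Icc fun hx => by
    rw [projIcc_of_mem hab hx]
    exact (hg x).hasDerivWithinAt.congr
      (fun y hy => by rw [projIcc_of_mem hab hy]) (by rw [projIcc_of_mem hab hx])
  have right : HasDerivWithinAt (fun y => g (projIcc a b hab y)) (g' (projIcc a b hab x))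
      (Ici b) x := .of_isClosed isClosed_Ici fun hx => by
    rw [projIcc_of_right_le hab hx, hb]
    exact (hasDerivWithinAt_const x _ (g b)).congr
      (fun y hy => by rw [projIcc_of_right_le hab hy]) (by rw [projIcc_of_right_le hab hx])
  have cover : Iic a ∪ Icc a b ∪ Ici b = univ := by
    ext y
    simp only [mem_union, mem_Iic, mem_Icc, mem_Ici, mem_univ, iff_true]
    by_cases hya : y ≤ a
    · exact .inl (.inl hya)
    · by_cases hyb : y ≤ b
      · exact .inl (.inr ⟨le_of_not_ge hya, hyb⟩)
      · exact .inr (le_of_not_ge hyb)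
  rw [← hasDerivWithinAt_univ, ← cover]
  exact (left.union mid).union right

theorem contDiff_one_comp_projIcc (hg : ∀ x, HasDerivAt g (g' x) x) (hg' : Continuous g')
    (ha : g' a = 0) (hb : g' b = 0) :
    ContDiff ℝ 1 (fun y => g (projIcc a b hab y)) := by
  have hd := hasDerivAt_comp_projIcc hab hg ha hb
  rw [contDiff_one_iff_deriv, show deriv _ = _ from funext fun x => (hd x).deriv]
  exact ⟨fun x => (hd x).differentiableAt,
    hg'.comp (continuous_subtype_val.comp continuous_projIcc)⟩

end ProjIcc

theorem HasDerivAt.comp_sub_div {f f' : ℝ → ℝ} (hf : ∀ x, HasDerivAt f (f' x) x)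
    (R c s : ℝ) : HasDerivAt (fun s => f ((s - R) / c)) (f' ((s - R) / c) / c) s := by
  simpa [Function.comp_def, div_eq_mul_inv] using
    (hf _).comp s (((hasDerivAt_id s).sub_const R).div_const c)

theorem profPhi_hasDerivAt (x : ℝ) : HasDerivAt profPhi (-6 * x * (1 - x)) x := by
  have h : HasDerivAt (fun y : ℝ => 1 - y) (-1) x := by
    simpa using (hasDerivAt_id x).const_sub 1
  refine (((h.pow 3).const_mul (-2 : ℝ)).add ((h.pow 2).const_mul (3 : ℝ))).congr_deriv ?_
  ring

theorem hasDerivAt_profPhi_deriv (x : ℝ) :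
    HasDerivAt (fun y : ℝ => -6 * y * (1 - y)) (12 * x - 6) x := by
  have h := ((hasDerivAt_id x).const_mul (-6 : ℝ)).mul ((hasDerivAt_id x).const_sub 1)
  refine h.congr_deriv ?_
  simp only [id]
  ring

theorem profPhi_zero : profPhi 0 = 1 := by norm_num [profPhi]

theorem profPhi_one : profPhi 1 = 0 := by norm_num [profPhi]

theorem profPhi_mem_Icc {x : ℝ} (hx : x ∈ Icc (0 : ℝ) 1) : profPhi x ∈ Icc (0 : ℝ) 1 := by
  obtain ⟨h0, h1⟩ := hx
  unfold profPhi
  -- `φ x = (1 - x)² (1 + 2x)` and `1 - φ x = x² (3 - 2x)`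
  constructor <;> nlinarith [mul_nonneg (sq_nonneg (1 - x)) (by linarith : 0 ≤ 1 + 2 * x),
    mul_nonneg (sq_nonneg x) (by linarith : 0 ≤ 3 - 2 * x)]

theorem antitoneOn_profPhi : AntitoneOn profPhi (Icc 0 1) := by
  intro x ⟨hx0, hx1⟩ y ⟨hy0, hy1⟩ hxy
  unfold profPhi
  nlinarith [mul_nonneg (sub_nonneg.2 hxy) (mul_nonneg hx0 (sub_nonneg.2 hy1)),
    mul_nonneg (sub_nonneg.2 hxy) (mul_nonneg hy0 (sub_nonneg.2 hx1)),
    mul_nonneg (sub_nonneg.2 hxy) (mul_nonneg hx0 (sub_nonneg.2 hx1)),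
    mul_nonneg (sub_nonneg.2 hxy) (mul_nonneg hy0 (sub_nonneg.2 hy1))]

theorem abs_profPhi_deriv_le {x : ℝ} (hx : x ∈ Icc (0 : ℝ) 1) : |-6 * x * (1 - x)| ≤ 3 / 2 := by
  rw [abs_le]
  constructor <;> nlinarith [sq_nonneg (x - 1 / 2), hx.1, hx.2]

theorem abs_profPhi_deriv_deriv_le {x : ℝ} (hx : x ∈ Icc (0 : ℝ) 1) : |12 * x - 6| ≤ 6 := by
  rw [abs_le]
  constructor <;> linarith [hx.1, hx.2]

noncomputable def profStep (x : ℝ) : ℝ := profPhi (projIcc 0 1 zero_le_one x)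

theorem profStep_of_nonpos {x : ℝ} (hx : x ≤ 0) : profStep x = 1 := by
  rw [profStep, projIcc_of_le_left _ hx, profPhi_zero]

theorem profStep_of_mem {x : ℝ} (hx : x ∈ Icc (0 : ℝ) 1) : profStep x = profPhi x := by
  rw [profStep, projIcc_of_mem _ hx]

theorem profStep_of_one_le {x : ℝ} (hx : 1 ≤ x) : profStep x = 0 := by
  rw [profStep, projIcc_of_right_le _ hx, profPhi_one]

theorem contDiff_profStep : ContDiff ℝ 1 profStep :=
  contDiff_one_comp_projIcc zero_le_one profPhi_hasDerivAt (by fun_prop) (by ring) (by ring)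

theorem antitone_profStep : Antitone profStep :=
  antitone_comp_projIcc zero_le_one antitoneOn_profPhi

theorem profStep_mem_Icc (x : ℝ) : profStep x ∈ Icc (0 : ℝ) 1 :=
  profPhi_mem_Icc (projIcc 0 1 zero_le_one x).2

section GammaProf

variable {ᾱ R ε : ℝ}

theorem gammaProf_eq_mul_profStep (hεR : 0 < ε * R) (r : ℝ) :
    gammaProf ᾱ R ε r = ᾱ * profStep ((r - R) / (ε * R)) := by
  unfold gammaProf
  split_ifs with hR hR'
  · rw [profStep_of_nonpos (div_nonpos_of_nonpos_of_nonneg (by linarith) hεR.le), mul_one]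
  · rw [profStep_of_mem ⟨div_nonneg (by linarith) hεR.le, (div_le_one hεR).2 (by linarith)⟩]
  · rw [profStep_of_one_le ((one_le_div hεR).2 (by linarith)), mul_zero]

theorem contDiff_gammaProf (hεR : 0 < ε * R) : ContDiff ℝ 1 (gammaProf ᾱ R ε) := by
  rw [funext (gammaProf_eq_mul_profStep hεR)]
  exact contDiff_const.mul (contDiff_profStep.comp (by fun_prop))

theorem antitone_gammaProf (hᾱ : 0 ≤ ᾱ) (hεR : 0 < ε * R) : Antitone (gammaProf ᾱ R ε) := by
  intro r s hrs
  rw [gammaProf_eq_mul_profStep hεR, gammaProf_eq_mul_profStep hεR]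
  exact mul_le_mul_of_nonneg_left (antitone_profStep (by gcongr)) hᾱ

theorem gammaProf_mem_Icc (hᾱ : 0 ≤ ᾱ) (hεR : 0 < ε * R) (r : ℝ) :
    gammaProf ᾱ R ε r ∈ Icc 0 ᾱ := by
  obtain ⟨h0, h1⟩ := profStep_mem_Icc ((r - R) / (ε * R))
  rw [gammaProf_eq_mul_profStep hεR]
  exact ⟨mul_nonneg hᾱ h0, mul_le_of_le_one_right hᾱ h1⟩

theorem gammaProf_eventuallyEq {r : ℝ} (hr : r ∈ Ioo R ((1 + ε) * R)) :
    gammaProf ᾱ R ε =ᶠ[nhds r] fun s => ᾱ * profPhi ((s - R) / (ε * R)) := by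
  filter_upwards [Ioo_mem_nhds hr.1 hr.2] with s hs
  simp [gammaProf, not_le.2 hs.1, hs.2.le]

theorem deriv_gammaProf {r : ℝ} (hr : r ∈ Ioo R ((1 + ε) * R)) :
    deriv (gammaProf ᾱ R ε) r =
      ᾱ * (-6 * ((r - R) / (ε * R)) * (1 - (r - R) / (ε * R))) / (ε * R) := by
  rw [(gammaProf_eventuallyEq hr).deriv_eq]
  exact (HasDerivAt.comp_sub_div (fun x => (profPhi_hasDerivAt x).const_mul ᾱ) _ _ r).deriv

theorem deriv_deriv_gammaProf {r : ℝ} (hr : r ∈ Ioo R ((1 + ε) * R)) :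
    deriv (deriv (gammaProf ᾱ R ε)) r = ᾱ * (12 * ((r - R) / (ε * R)) - 6) / (ε * R) ^ 2 := by
  have hd : deriv (fun s => ᾱ * profPhi ((s - R) / (ε * R))) =
      fun s => ᾱ * (-6 * ((s - R) / (ε * R)) * (1 - (s - R) / (ε * R))) / (ε * R) :=
    funext fun s =>
      (HasDerivAt.comp_sub_div (fun x => (profPhi_hasDerivAt x).const_mul ᾱ) _ _ s).deriv
  rw [(gammaProf_eventuallyEq hr).deriv.deriv_eq, hd, sq, ← div_div]
  exact (HasDerivAt.comp_sub_div
    (fun x => ((hasDerivAt_profPhi_deriv x).const_mul ᾱ).div_const (ε * R)) _ _ r).deriv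

end GammaProf

theorem abs_radial_laplacian_gammaProf_le {ᾱ R ε k r : ℝ} (hᾱ : 0 ≤ ᾱ) (hR : 0 < R)
    (hε : 0 < ε) (hk : 0 ≤ k) (hr : r ∈ Ioo R ((1 + ε) * R)) :
    |deriv (deriv (gammaProf ᾱ R ε)) r + k / r * deriv (gammaProf ᾱ R ε) r|
      ≤ ᾱ / R ^ 2 * (6 / ε ^ 2 + 3 * k / (2 * ε)) := by
  have hεR : 0 < ε * R := mul_pos hε hR
  set u := (r - R) / (ε * R)
  have hu : u ∈ Icc (0 : ℝ) 1 :=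
    ⟨div_nonneg (by linarith [hr.1]) hεR.le, (div_le_one hεR).2 (by linarith [hr.2])⟩
  have hkr : k / r ≤ k / R := div_le_div_of_nonneg_left hk hR hr.1.le
  rw [deriv_deriv_gammaProf hr, deriv_gammaProf hr]
  calc _ ≤ |ᾱ * (12 * u - 6) / (ε * R) ^ 2| + |k / r * (ᾱ * (-6 * u * (1 - u)) / (ε * R))| :=
        abs_add_le _ _
    _ = ᾱ * |12 * u - 6| / (ε * R) ^ 2 + k / r * (ᾱ * |-6 * u * (1 - u)| / (ε * R)) := by
        rw [abs_div, abs_mul ᾱ, abs_of_nonneg hᾱ, abs_of_pos (pow_pos hεR 2), abs_mul (k / r),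
          abs_of_nonneg (div_nonneg hk (hR.trans hr.1).le), abs_div, abs_mul ᾱ,
          abs_of_nonneg hᾱ, abs_of_pos hεR]
    _ ≤ ᾱ * 6 / (ε * R) ^ 2 + k / R * (ᾱ * (3 / 2) / (ε * R)) := by
        gcongr
        · exact abs_profPhi_deriv_deriv_le hu
        · exact abs_profPhi_deriv_le hu
    _ = ᾱ / R ^ 2 * (6 / ε ^ 2 + 3 * k / (2 * ε)) := by
        field_simp

/-- Properties of the radial subsolution profile `γ`:
(i) it is C¹ on `[0,∞)`, nonincreasing, with values in `[0,ᾱ]`, support in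
`[0,(1+ε)R]` and identically `ᾱ` on `[0,R]`;
(ii) if `6/ε² + 3(d-1)/(2ε) ≤ R²μ(1-ᾱ)/(σᾱ)` then the radial Laplacian of `γ`
satisfies `σ|γ'' + ((d-1)/r)γ'| ≤ μ(1-γ)` on the annulus `R < r < (1+ε)R`. -/
theorem gamma_profile_properties
    (d : ℕ) (hd : 1 ≤ d) (σ μ R ε ᾱ : ℝ) (hσ : 0 < σ) (hμ : 0 < μ)
    (hR : 0 < R) (hε : 0 < ε) (hᾱ : ᾱ ∈ Set.Ioo (0:ℝ) 1) :
    (ContDiffOn ℝ 1 (gammaProf ᾱ R ε) (Set.Ici 0) ∧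
     AntitoneOn (gammaProf ᾱ R ε) (Set.Ici 0) ∧
     (∀ r ≥ (0:ℝ), gammaProf ᾱ R ε r ∈ Set.Icc 0 ᾱ) ∧
     (∀ r > (1 + ε) * R, gammaProf ᾱ R ε r = 0) ∧
     (∀ r ∈ Set.Icc (0:ℝ) R, gammaProf ᾱ R ε r = ᾱ)) ∧
    (6 / ε ^ 2 + 3 * ((d:ℝ) - 1) / (2 * ε) ≤ R ^ 2 * μ * (1 - ᾱ) / (σ * ᾱ) →
      ∀ r ∈ Set.Ioo R ((1 + ε) * R),
        σ * |deriv (deriv (gammaProf ᾱ R ε)) r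
              + (((d:ℝ) - 1) / r) * deriv (gammaProf ᾱ R ε) r|
          ≤ μ * (1 - gammaProf ᾱ R ε r)) := by
  have hεR : 0 < ε * R := mul_pos hε hR
  have hRε : R < (1 + ε) * R := by nlinarith
  refine ⟨⟨(contDiff_gammaProf hεR).contDiffOn,
    (antitone_gammaProf hᾱ.1.le hεR).antitoneOn _,
    fun r _ => gammaProf_mem_Icc hᾱ.1.le hεR r,
    fun r hr => by simp [gammaProf, not_le.2 (hRε.trans hr), not_le.2 hr],
    fun r hr => if_pos hr.2⟩, fun H r hr => ?_⟩
  have hk : (0 : ℝ) ≤ d - 1 := sub_nonneg.2 (by exact_mod_cast hd)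
  calc _ ≤ σ * (ᾱ / R ^ 2 * (6 / ε ^ 2 + 3 * ((d : ℝ) - 1) / (2 * ε))) := by
        gcongr
        exact abs_radial_laplacian_gammaProf_le hᾱ.1.le hR hε hk hr
    _ ≤ σ * (ᾱ / R ^ 2 * (R ^ 2 * μ * (1 - ᾱ) / (σ * ᾱ))) := by
        gcongr
        exact div_nonneg hᾱ.1.le (sq_nonneg R)
    _ = μ * (1 - ᾱ) := by
        field_simp [hᾱ.1.ne']
    _ ≤ μ * (1 - gammaProf ᾱ R ε r) := by
        gcongr
        exact (gammaProf_mem_Icc hᾱ.1.le hεR r).2
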